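/- Let 0<q<1, w>0, k ∈ ℝ, a_1,…,a_r, b_1,…,b_s ≥ 0, and let f be a positive function on (0,∞) satisfying f(x+w) = ( [x+a_1]_q ⋯ [x+a_r]_q / ([x+b_1]_q ⋯ [x+b_s]_q) )^k f(x) for all x>0 and f(w)=1. If for some integer n≥1 the n-th derivative d^n/dx^n log f(x) exists and is monotone for x>L (for some L≥0), then f(x) = ( ∏_{j=1}^r Γ_{q^w}((x+a_j)/w)/Γ_{q^w}((w+a_j)/w) · ∏_{i=1}^s Γ_{q^w}((w+b_i)/w)/Γ_{q^w}((x+b_i)/w) · [w]_q^{(r−s)(x/w−1)} )^k for all x>0. -/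

import Mathlib

/-!
On `(0, ∞)` the logarithm of the canonical solution `F` is an exponential series
`∑ₘ Aₘ q^((m+1)x)` with polynomially bounded coefficients plus an affine function; this comes
from `log (t; p)_∞ = -∑ₘ t^(m+1) / ((m+1)(1 - p^(m+1)))` at `t = q^(x+s)`, `p = q^w`. Hence
`log F` is smooth and each of its derivatives of order `≥ 1` converges as `x → ∞`, while
`Γ_p(y+1) = [y]_p Γ_p(y)` shows that `F` satisfies the same functional equation as `f`.
So `h = log f - log F` is `w`-periodic, and `h⁽ⁿ⁾` plus a convergent function is monotone on a
half-line, which forces the periodic `h⁽ⁿ⁾` to be constant. A periodic function with constant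
derivative is constant; descending, `h` is constant, and `h w = 0`.
-/

open Real Set

/-- The infinite q-Pochhammer symbol `(a;q)_∞ = ∏_{k≥0} (1 - a q^k)`. -/
noncomputable def qPochInf (a q : ℝ) : ℝ := ∏' k : ℕ, (1 - a * q ^ k)

/-- Jackson's q-gamma function for `0 < q < 1`. -/
noncomputable def qGamma (q x : ℝ) : ℝ :=
  qPochInf q q / qPochInf (q ^ x) q * (1 - q) ^ (1 - x)

/-- The q-number `[x]_q = (1 - q^x)/(1 - q)`. -/
noncomputable def qBracket (q x : ℝ) : ℝ := (1 - q ^ x) / (1 - q)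

/-- The canonical solution `F` of the functional equation. -/
noncomputable def mainSol (q w k : ℝ) (r s : ℕ) (a : Fin r → ℝ) (b : Fin s → ℝ)
    (x : ℝ) : ℝ :=
  ((∏ j, qGamma (q ^ w) ((x + a j) / w) / qGamma (q ^ w) ((w + a j) / w)) *
   (∏ i, qGamma (q ^ w) ((w + b i) / w) / qGamma (q ^ w) ((x + b i) / w)) *
   qBracket q w ^ (((r : ℝ) - (s : ℝ)) * (x / w - 1))) ^ k

open Filter Topology

noncomputable def expSum (c : ℝ) (A : ℕ → ℝ) (x : ℝ) : ℝ :=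
  ∑' m : ℕ, A m * exp ((m + 1) * c * x)

def PolyGrowth (A : ℕ → ℝ) : Prop :=
  ∃ C : ℝ, ∃ d : ℕ, ∀ m, |A m| ≤ C * (m + 1) ^ d

namespace PolyGrowth

variable {A B : ℕ → ℝ}

lemma of_abs_le {C : ℝ} (h : ∀ m, |A m| ≤ C) : PolyGrowth A :=
  ⟨C, 0, by simpa using h⟩

lemma const_mul (hA : PolyGrowth A) (k : ℝ) : PolyGrowth fun m => k * A m := by
  obtain ⟨C, d, hC⟩ := hA
  refine ⟨|k| * C, d, fun m => ?_⟩
  rw [abs_mul, mul_assoc]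
  exact mul_le_mul_of_nonneg_left (hC m) (abs_nonneg k)

lemma add (hA : PolyGrowth A) (hB : PolyGrowth B) : PolyGrowth fun m => A m + B m := by
  obtain ⟨C, d, hC⟩ := hA
  obtain ⟨C', d', hC'⟩ := hB
  refine ⟨|C| + |C'|, d + d', fun m => ?_⟩
  have h1 : (1 : ℝ) ≤ m + 1 := by simp
  have hle : ∀ {K : ℝ} {e : ℕ}, e ≤ d + d' → K * (m + 1 : ℝ) ^ e ≤ |K| * (m + 1) ^ (d + d') :=
    fun he => mul_le_mul (le_abs_self _) (pow_le_pow_right₀ h1 he) (by positivity)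
      (abs_nonneg _)
  calc |A m + B m| ≤ |A m| + |B m| := abs_add_le _ _
    _ ≤ |C| * (m + 1) ^ (d + d') + |C'| * (m + 1) ^ (d + d') :=
      add_le_add ((hC m).trans (hle (by omega))) ((hC' m).trans (hle (by omega)))
    _ = (|C| + |C'|) * (m + 1) ^ (d + d') := by ring

lemma mul_weight (hA : PolyGrowth A) (c : ℝ) : PolyGrowth fun m => A m * ((m + 1) * c) := by
  obtain ⟨C, d, hC⟩ := hA
  refine ⟨C * |c|, d + 1, fun m => ?_⟩
  rw [abs_mul, abs_mul, abs_of_pos (by positivity : (0 : ℝ) < m + 1)]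
  calc |A m| * ((m + 1) * |c|) ≤ C * (m + 1) ^ d * ((m + 1) * |c|) := by gcongr; exact hC m
    _ = C * |c| * (m + 1) ^ (d + 1) := by ring

lemma summable_mul_exp (hA : PolyGrowth A) {c x : ℝ} (hc : c < 0) (hx : 0 < x) :
    Summable fun m : ℕ => A m * exp ((m + 1) * c * x) := by
  obtain ⟨C, d, hC⟩ := hA
  have hr : ‖exp (c * x)‖ < 1 := by
    rw [Real.norm_eq_abs, abs_of_pos (exp_pos _), exp_lt_one_iff]
    exact mul_neg_of_neg_of_pos hc hx
  have hgeom := ((summable_pow_mul_geometric_of_norm_lt_one d hr).comp_injective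
    Nat.succ_injective).mul_left C
  refine hgeom.of_norm_bounded fun m => ?_
  have hexp : exp ((m + 1) * c * x) = exp (c * x) ^ (m + 1) := by
    rw [← exp_nat_mul]; push_cast; ring_nf
  rw [Real.norm_eq_abs, abs_mul, abs_of_pos (exp_pos _), hexp]
  simpa [mul_assoc] using mul_le_mul_of_nonneg_right (hC m) (by positivity)

end PolyGrowth

section expSum

variable {c : ℝ} {A B : ℕ → ℝ}

lemma expSum_add (hc : c < 0) (hA : PolyGrowth A) (hB : PolyGrowth B) {x : ℝ} (hx : 0 < x) :
    expSum c (fun m => A m + B m) x = expSum c A x + expSum c B x := by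
  rw [expSum, expSum, expSum,
    ← (hA.summable_mul_exp hc hx).tsum_add (hB.summable_mul_exp hc hx)]
  simp only [add_mul]

lemma expSum_const_mul (k : ℝ) (x : ℝ) : expSum c (fun m => k * A m) x = k * expSum c A x := by
  simp only [expSum, mul_assoc, tsum_mul_left]

lemma expSum_zero (x : ℝ) : expSum c (fun _ => 0) x = 0 := by
  simp [expSum]

lemma abs_mul_exp_le_of_le (hc : c < 0) (a : ℝ) (m : ℕ) {x y : ℝ} (hxy : x ≤ y) :
    |a * exp ((m + 1) * c * y)| ≤ |a * exp ((m + 1) * c * x)| := by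
  simp only [abs_mul, abs_exp]
  have hmc : (m + 1 : ℝ) * c ≤ 0 := mul_nonpos_of_nonneg_of_nonpos (by positivity) hc.le
  exact mul_le_mul_of_nonneg_left (exp_le_exp.2 (mul_le_mul_of_nonpos_left hxy hmc))
    (abs_nonneg a)

lemma hasDerivAt_expSum (hc : c < 0) (hA : PolyGrowth A) {x : ℝ} (hx : 0 < x) :
    HasDerivAt (expSum c A) (expSum c (fun m => A m * ((m + 1) * c)) x) x := by
  have hterm : ∀ (m : ℕ) (y : ℝ), HasDerivAt (fun z => A m * exp ((m + 1) * c * z))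
      (A m * ((m + 1) * c) * exp ((m + 1) * c * y)) y := fun m y =>
    (((hasDerivAt_const_mul ((m + 1 : ℝ) * c)).exp).const_mul (A m)).congr_deriv (by ring)
  -- on `(x/2, ∞)` the derivatives are dominated by their values at `x/2`
  have hhalf : 0 < x / 2 := by linarith
  have hxmem : x ∈ Ioi (x / 2) := by simp only [mem_Ioi]; linarith
  exact hasDerivAt_tsum_of_isPreconnected ((hA.mul_weight c).summable_mul_exp hc hhalf).abs
    isOpen_Ioi (convex_Ioi _).isPreconnected (fun m y _ => hterm m y)
    (fun m y hy => abs_mul_exp_le_of_le hc _ m (le_of_lt hy)) hxmem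
    (hA.summable_mul_exp hc hx) hxmem

lemma eqOn_deriv_expSum (hc : c < 0) (hA : PolyGrowth A) :
    EqOn (deriv (expSum c A)) (expSum c fun m => A m * ((m + 1) * c)) (Ioi 0) :=
  fun _ hx => (hasDerivAt_expSum hc hA hx).deriv

lemma contDiffOn_expSum (hc : c < 0) (hA : PolyGrowth A) (N : ℕ) :
    ContDiffOn ℝ N (expSum c A) (Ioi 0) := by
  induction N generalizing A with
  | zero =>
    rw [Nat.cast_zero, contDiffOn_zero]
    exact fun x hx => (hasDerivAt_expSum hc hA hx).continuousAt.continuousWithinAt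
  | succ N ih =>
    rw [Nat.cast_succ, contDiffOn_succ_iff_deriv_of_isOpen isOpen_Ioi]
    exact ⟨fun x hx => (hasDerivAt_expSum hc hA hx).differentiableAt.differentiableWithinAt,
      by simp, (ih (hA.mul_weight c)).congr (eqOn_deriv_expSum hc hA)⟩

lemma tendsto_expSum_atTop (hc : c < 0) (hA : PolyGrowth A) :
    Tendsto (expSum c A) atTop (𝓝 0) := by
  have hterm : ∀ m : ℕ, Tendsto (fun x => A m * exp ((m + 1) * c * x)) atTop (𝓝 0) := by
    intro m
    simpa using (tendsto_exp_atBot.comp (tendsto_id.const_mul_atTop_of_neg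
      (mul_neg_of_pos_of_neg (by positivity) hc))).const_mul (A m)
  show Tendsto (fun x => ∑' m : ℕ, A m * exp ((m + 1) * c * x)) atTop (𝓝 0)
  simpa using tendsto_tsum_of_dominated_convergence (hA.summable_mul_exp hc one_pos).abs hterm
    (eventually_ge_atTop 1 |>.mono fun x hx m => abs_mul_exp_le_of_le hc _ m hx)

lemma tendsto_iteratedDeriv_expSum (hc : c < 0) (hA : PolyGrowth A) (N : ℕ) :
    Tendsto (iteratedDeriv N (expSum c A)) atTop (𝓝 0) := by
  induction N generalizing A with
  | zero => simpa using tendsto_expSum_atTop hc hA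
  | succ N ih =>
    refine (ih (hA.mul_weight c)).congr' ?_
    filter_upwards [eventually_gt_atTop 0] with x hx
    rw [iteratedDeriv_succ']
    exact (Filter.EventuallyEq.iteratedDeriv_eq N (Filter.eventuallyEq_of_mem
      (isOpen_Ioi.mem_nhds hx) (eqOn_deriv_expSum hc hA))).symm

end expSum

def IsExpAffine (c : ℝ) (F : ℝ → ℝ) : Prop :=
  ∃ A, PolyGrowth A ∧ ∃ u v : ℝ, ∀ x > 0, F x = expSum c A x + (u * x + v)

lemma isExpAffine_affine (c u v : ℝ) : IsExpAffine c fun x => u * x + v :=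
  ⟨fun _ => 0, .of_abs_le (C := 0) (by simp), u, v, fun x _ => by rw [expSum_zero, zero_add]⟩

namespace IsExpAffine

variable {c : ℝ} {F G : ℝ → ℝ}

lemma congr (hF : IsExpAffine c F) (h : ∀ x > 0, F x = G x) : IsExpAffine c G := by
  obtain ⟨A, hA, u, v, hF⟩ := hF
  exact ⟨A, hA, u, v, fun x hx => (h x hx).symm.trans (hF x hx)⟩

lemma add (hc : c < 0) (hF : IsExpAffine c F) (hG : IsExpAffine c G) :
    IsExpAffine c fun x => F x + G x := by
  obtain ⟨A, hA, u, v, hF⟩ := hF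
  obtain ⟨B, hB, u', v', hG⟩ := hG
  refine ⟨_, hA.add hB, u + u', v + v', fun x hx => ?_⟩
  dsimp only
  rw [hF x hx, hG x hx, expSum_add hc hA hB hx]
  ring

lemma const_mul (hF : IsExpAffine c F) (k : ℝ) : IsExpAffine c fun x => k * F x := by
  obtain ⟨A, hA, u, v, hF⟩ := hF
  refine ⟨_, hA.const_mul k, k * u, k * v, fun x hx => ?_⟩
  dsimp only
  rw [hF x hx, expSum_const_mul]
  ring

lemma sub (hc : c < 0) (hF : IsExpAffine c F) (hG : IsExpAffine c G) :
    IsExpAffine c fun x => F x - G x :=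
  (hF.add hc (hG.const_mul (-1))).congr fun x _ => by ring

lemma sum (hc : c < 0) {ι : Type*} (s : Finset ι) {F : ι → ℝ → ℝ}
    (hF : ∀ i ∈ s, IsExpAffine c (F i)) : IsExpAffine c fun x => ∑ i ∈ s, F i x := by
  classical
  induction s using Finset.induction_on with
  | empty => simpa using isExpAffine_affine c 0 0
  | insert i s hi ih =>
    simp only [Finset.sum_insert hi]
    exact (hF i (s.mem_insert_self i)).add hc (ih fun j hj => hF j (s.mem_insert_of_mem hj))

lemma contDiffOn (hc : c < 0) (hF : IsExpAffine c F) (N : ℕ) : ContDiffOn ℝ N F (Ioi 0) := by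
  obtain ⟨A, hA, u, v, hF⟩ := hF
  have haff : ContDiff ℝ N fun x => u * x + v := by fun_prop
  exact ((contDiffOn_expSum hc hA N).add haff.contDiffOn).congr hF

lemma tendsto_iteratedDeriv (hc : c < 0) (hF : IsExpAffine c F) {n : ℕ} (hn : 1 ≤ n) :
    ∃ l, Tendsto (iteratedDeriv n F) atTop (𝓝 l) := by
  obtain ⟨A, hA, u, v, hF⟩ := hF
  obtain ⟨N, rfl⟩ := Nat.exists_eq_add_of_le' hn
  set A' := fun m : ℕ => A m * ((m + 1) * c)
  have hderiv : EqOn (deriv F) (fun x => u + expSum c A' x) (Ioi 0) := fun x hx => by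
    have hΦ : HasDerivAt (fun x => expSum c A x + (u * x + v)) (expSum c A' x + u) x :=
      (hasDerivAt_expSum hc hA hx).add (((hasDerivAt_id x).const_mul u).add_const v |>.congr_deriv
        (mul_one u))
    rw [(hΦ.congr_of_eventuallyEq (eventuallyEq_of_mem (isOpen_Ioi.mem_nhds hx) hF)).deriv,
      add_comm]
  have hiter : ∀ x > 0, iteratedDeriv (N + 1) F x =
      (if N = 0 then u else 0) + iteratedDeriv N (expSum c A') x := fun x hx => by
    rw [iteratedDeriv_succ',
      (eventuallyEq_of_mem (isOpen_Ioi.mem_nhds hx) hderiv).iteratedDeriv_eq N]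
    rcases N.eq_zero_or_pos with rfl | hN
    · simp
    · rw [iteratedDeriv_const_add hN, if_neg hN.ne']
      ring
  refine ⟨(if N = 0 then u else 0) + 0, ?_⟩
  refine ((tendsto_iteratedDeriv_expSum hc (hA.mul_weight c) N).const_add _).congr' ?_
  filter_upwards [eventually_gt_atTop 0] with x hx
  exact (hiter x hx).symm

end IsExpAffine

section QPochhammer

variable {p t : ℝ}

lemma hasSum_log_one_sub_mul_pow (hp0 : 0 < p) (hp1 : p < 1) (ht0 : 0 ≤ t) (ht1 : t < 1) :
    HasSum (fun j : ℕ => log (1 - t * p ^ j))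
      (∑' m : ℕ, -(t ^ (m + 1) / ((m + 1) * (1 - p ^ (m + 1))))) := by
  -- expand every logarithm into its power series and sum the double series column by column
  set F : ℕ × ℕ → ℝ := fun jm => -((t * p ^ jm.1) ^ (jm.2 + 1) / (jm.2 + 1))
  have hF : Summable F := by
    have hgeom : ∀ {a : ℝ}, 0 ≤ a → a < 1 → Summable fun n : ℕ => ‖a ^ n‖ := fun ha0 ha1 => by
      simpa [abs_of_nonneg (pow_nonneg ha0 _)] using summable_geometric_of_lt_one ha0 ha1
    refine (summable_mul_of_summable_norm (hgeom hp0.le hp1) (hgeom ht0 ht1)).of_norm_bounded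
      fun ⟨j, m⟩ => ?_
    have hpj : (p ^ j) ^ (m + 1) ≤ p ^ j :=
      pow_le_of_le_one (by positivity) (pow_le_one₀ hp0.le hp1.le) m.succ_ne_zero
    have h1 : (1 : ℝ) ≤ m + 1 := by simp
    simp only [F, norm_neg, norm_div, norm_pow, norm_mul, Real.norm_of_nonneg ht0,
      Real.norm_of_nonneg hp0.le, Real.norm_of_nonneg (by positivity : (0 : ℝ) ≤ m + 1)]
    calc (t * p ^ j) ^ (m + 1) / (m + 1) ≤ (t * p ^ j) ^ (m + 1) :=
          div_le_self (by positivity) h1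
      _ = t ^ (m + 1) * (p ^ j) ^ (m + 1) := mul_pow _ _ _
      _ ≤ t ^ (m + 1) * p ^ j := by gcongr
      _ ≤ p ^ j * t ^ m := by
          rw [mul_comm]
          exact mul_le_mul_of_nonneg_left (pow_le_pow_of_le_one ht0 ht1.le m.le_succ)
            (by positivity)
  have hrow : ∀ j, HasSum (fun m => F (j, m)) (log (1 - t * p ^ j)) := fun j => by
    have htpj : |t * p ^ j| < 1 := by
      rw [abs_of_nonneg (by positivity)]
      exact (mul_le_of_le_one_right ht0 (pow_le_one₀ hp0.le hp1.le)).trans_lt ht1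
    simpa using (hasSum_pow_div_log_of_abs_lt_one htpj).neg
  have hcol : ∀ m : ℕ, HasSum (fun j => F (j, m))
      (-(t ^ (m + 1) / ((m + 1) * (1 - p ^ (m + 1))))) := fun m => by
    have hpm : p ^ (m + 1) < 1 := pow_lt_one₀ hp0.le hp1 m.succ_ne_zero
    have hterm : (fun j => F (j, m)) = fun j => -(t ^ (m + 1) / (m + 1)) * (p ^ (m + 1)) ^ j := by
      funext j
      simp only [F, mul_pow, ← pow_mul, mul_comm j]
      ring
    have hsum : -(t ^ (m + 1) / ((m + 1) * (1 - p ^ (m + 1)))) =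
        -(t ^ (m + 1) / (m + 1)) * (1 - p ^ (m + 1))⁻¹ := by
      rw [← div_div, div_eq_mul_inv _ (1 - _), neg_mul]
    rw [hterm, hsum]
    exact (hasSum_geometric_of_lt_one (by positivity) hpm).mul_left _
  rw [((hF.comp_injective (Equiv.prodComm ℕ ℕ).injective).hasSum.prod_fiberwise hcol).tsum_eq,
    show ∑' jm, (F ∘ Equiv.prodComm ℕ ℕ) jm = ∑' jm, F jm from (Equiv.prodComm ℕ ℕ).tsum_eq F]
  exact hF.hasSum.prod_fiberwise hrow

lemma hasProd_qPochInf (hp0 : 0 < p) (hp1 : p < 1) (ht0 : 0 ≤ t) (ht1 : t < 1) :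
    HasProd (fun j : ℕ => 1 - t * p ^ j)
      (exp (∑' m : ℕ, -(t ^ (m + 1) / ((m + 1) * (1 - p ^ (m + 1)))))) := by
  have hfactor : ∀ j : ℕ, 0 < 1 - t * p ^ j := fun j => by
    nlinarith [mul_le_of_le_one_right ht0 (pow_le_one₀ (n := j) hp0.le hp1.le)]
  simpa [Function.comp_def, exp_log (hfactor _)] using
    (hasSum_log_one_sub_mul_pow hp0 hp1 ht0 ht1).rexp

lemma log_qPochInf (hp0 : 0 < p) (hp1 : p < 1) (ht0 : 0 ≤ t) (ht1 : t < 1) :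
    log (qPochInf t p) = ∑' m : ℕ, -(t ^ (m + 1) / ((m + 1) * (1 - p ^ (m + 1)))) := by
  rw [qPochInf, (hasProd_qPochInf hp0 hp1 ht0 ht1).tprod_eq, log_exp]

lemma qPochInf_pos (hp0 : 0 < p) (hp1 : p < 1) (ht0 : 0 ≤ t) (ht1 : t < 1) :
    0 < qPochInf t p := by
  rw [qPochInf, (hasProd_qPochInf hp0 hp1 ht0 ht1).tprod_eq]
  exact exp_pos _

lemma qPochInf_eq_one_sub_mul (hp0 : 0 < p) (hp1 : p < 1) (ht0 : 0 ≤ t) (ht1 : t < 1) :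
    qPochInf t p = (1 - t) * qPochInf (t * p) p := by
  have htp : t * p < 1 := (mul_le_of_le_one_right ht0 hp1.le).trans_lt ht1
  have hshift : Multipliable fun j : ℕ => 1 - t * p ^ (j + 1) := by
    simpa only [mul_assoc, ← pow_succ'] using
      (hasProd_qPochInf hp0 hp1 (mul_nonneg ht0 hp0.le) htp).multipliable
  rw [qPochInf, qPochInf, tprod_eq_zero_mul' (f := fun j : ℕ => 1 - t * p ^ j) hshift]
  simp only [pow_zero, mul_one, mul_assoc, ← pow_succ']

end QPochhammer

section QGamma

variable {p q w y : ℝ}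

lemma qGamma_pos (hp0 : 0 < p) (hp1 : p < 1) (hy : 0 < y) : 0 < qGamma p y := by
  have h1 := qPochInf_pos hp0 hp1 hp0.le hp1
  have h2 := qPochInf_pos hp0 hp1 (rpow_nonneg hp0.le y) (rpow_lt_one hp0.le hp1 hy)
  have h3 : 0 < 1 - p := by linarith
  unfold qGamma
  positivity

lemma qGamma_add_one (hp0 : 0 < p) (hp1 : p < 1) (hy : 0 < y) :
    qGamma p (y + 1) = qBracket p y * qGamma p y := by
  have hpy := rpow_lt_one hp0.le hp1 hy
  have h1 : 0 < qPochInf (p ^ (y + 1)) p :=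
    qPochInf_pos hp0 hp1 (rpow_nonneg hp0.le _) (rpow_lt_one hp0.le hp1 (by linarith))
  have h2 : 1 - p ≠ 0 := by linarith
  rw [qGamma, qGamma, qBracket, qPochInf_eq_one_sub_mul hp0 hp1 (rpow_nonneg hp0.le y) hpy,
    ← rpow_add_one hp0.ne', show 1 - (y + 1) = (1 - y) - 1 by ring, rpow_sub_one h2]
  have h3 : 1 - p ^ y ≠ 0 := by linarith
  field_simp

lemma log_qGamma (hp0 : 0 < p) (hp1 : p < 1) (hy : 0 < y) :
    log (qGamma p y) =
      log (qPochInf p p) - log (qPochInf (p ^ y) p) + (1 - y) * log (1 - p) := by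
  have h1 := qPochInf_pos hp0 hp1 hp0.le hp1
  have h2 := qPochInf_pos hp0 hp1 (rpow_nonneg hp0.le y) (rpow_lt_one hp0.le hp1 hy)
  have h3 : 0 < 1 - p := by linarith
  rw [qGamma, log_mul (by positivity) (by positivity), log_div h1.ne' h2.ne', log_rpow h3]

lemma qBracket_pos (hq0 : 0 < q) (hq1 : q < 1) (hy : 0 < y) : 0 < qBracket q y := by
  have h1 := rpow_lt_one hq0.le hq1 hy
  exact div_pos (by linarith) (by linarith)

lemma qBracket_rpow_div_mul (hq0 : 0 < q) (hq1 : q < 1) (hw : 0 < w) (y : ℝ) :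
    qBracket (q ^ w) (y / w) * qBracket q w = qBracket q y := by
  have h1 : 1 - q ^ w ≠ 0 := (sub_pos.2 (rpow_lt_one hq0.le hq1 hw)).ne'
  have h2 : 1 - q ≠ 0 := by linarith
  rw [qBracket, qBracket, qBracket, ← rpow_mul hq0.le, mul_div_cancel₀ y hw.ne']
  field_simp

lemma qGamma_rpow_div_pos (hq0 : 0 < q) (hq1 : q < 1) (hw : 0 < w) (hy : 0 < y) :
    0 < qGamma (q ^ w) (y / w) :=
  qGamma_pos (rpow_pos_of_pos hq0 w) (rpow_lt_one hq0.le hq1 hw) (div_pos hy hw)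

lemma log_qGamma_rpow_add (hq0 : 0 < q) (hq1 : q < 1) (hw : 0 < w) (hy : 0 < y) :
    log (qGamma (q ^ w) ((y + w) / w)) =
      log (qBracket q y) - log (qBracket q w) + log (qGamma (q ^ w) (y / w)) := by
  have hp0 : 0 < q ^ w := rpow_pos_of_pos hq0 w
  have hp1 : q ^ w < 1 := rpow_lt_one hq0.le hq1 hw
  have hyw : 0 < y / w := div_pos hy hw
  rw [add_div, div_self hw.ne', qGamma_add_one hp0 hp1 hyw,
    log_mul (qBracket_pos hp0 hp1 hyw).ne' (qGamma_pos hp0 hp1 hyw).ne',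
    ← qBracket_rpow_div_mul hq0 hq1 hw y, log_mul (qBracket_pos hp0 hp1 hyw).ne'
      (qBracket_pos hq0 hq1 hw).ne']
  ring

lemma rpow_add_pow_succ_eq_mul_exp (hq0 : 0 < q) (x s₀ : ℝ) (m : ℕ) :
    (q ^ (x + s₀)) ^ (m + 1) = q ^ ((m + 1) * s₀) * exp ((m + 1) * log q * x) := by
  rw [← rpow_natCast, ← rpow_mul hq0.le, rpow_def_of_pos hq0, rpow_def_of_pos hq0, ← exp_add]
  push_cast
  ring_nf

lemma isExpAffine_log_qGamma_rpow (hq0 : 0 < q) (hq1 : q < 1) (hw : 0 < w) {s₀ : ℝ}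
    (hs₀ : 0 ≤ s₀) : IsExpAffine (log q) fun x => log (qGamma (q ^ w) ((x + s₀) / w)) := by
  have hp0 : 0 < q ^ w := rpow_pos_of_pos hq0 w
  have hp1 : q ^ w < 1 := rpow_lt_one hq0.le hq1 hw
  set A : ℕ → ℝ := fun m => q ^ ((m + 1) * s₀) / ((m + 1) * (1 - (q ^ w) ^ (m + 1)))
  have hA : PolyGrowth A := by
    refine .of_abs_le (C := (1 - q ^ w)⁻¹) fun m => ?_
    have hpm : (q ^ w) ^ (m + 1) ≤ q ^ w := pow_le_of_le_one hp0.le hp1.le m.succ_ne_zero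
    have hnum : q ^ ((m + 1) * s₀) ≤ 1 := rpow_le_one hq0.le hq1.le (by positivity)
    have hden : 1 - q ^ w ≤ (m + 1) * (1 - (q ^ w) ^ (m + 1)) := by
      nlinarith [(by simp : (1 : ℝ) ≤ m + 1)]
    rw [abs_of_nonneg (div_nonneg (by positivity) ((sub_pos.2 hp1).le.trans hden)),
      ← one_div]
    exact div_le_div₀ zero_le_one hnum (sub_pos.2 hp1) hden
  refine ⟨A, hA, -log (1 - q ^ w) / w,
    log (qPochInf (q ^ w) (q ^ w)) + (1 - s₀ / w) * log (1 - q ^ w), fun x hx => ?_⟩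
  dsimp only
  have hxs : 0 < x + s₀ := by linarith
  rw [log_qGamma hp0 hp1 (div_pos hxs hw), ← rpow_mul hq0.le, mul_div_cancel₀ _ hw.ne',
    log_qPochInf hp0 hp1 (rpow_nonneg hq0.le _) (rpow_lt_one hq0.le hq1 hxs), tsum_neg, expSum]
  simp only [rpow_add_pow_succ_eq_mul_exp hq0, A, div_mul_eq_mul_div]
  ring

end QGamma

section MainSol

variable {q w k : ℝ} {r s : ℕ} {a : Fin r → ℝ} {b : Fin s → ℝ}

lemma log_mainSol (hq0 : 0 < q) (hq1 : q < 1) (hw : 0 < w) (ha : ∀ i, 0 ≤ a i)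
    (hb : ∀ j, 0 ≤ b j) {x : ℝ} (hx : 0 < x) :
    log (mainSol q w k r s a b x) = k *
      (∑ j, (log (qGamma (q ^ w) ((x + a j) / w)) - log (qGamma (q ^ w) ((w + a j) / w))) +
        ∑ i, (log (qGamma (q ^ w) ((w + b i) / w)) - log (qGamma (q ^ w) ((x + b i) / w))) +
        (r - s) * (x / w - 1) * log (qBracket q w)) := by
  have hΓ : ∀ y > 0, 0 < qGamma (q ^ w) (y / w) := fun _ hy => qGamma_rpow_div_pos hq0 hq1 hw hy
  have hratio : ∀ {y z : ℝ}, 0 < y → 0 < z →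
      log (qGamma (q ^ w) (y / w) / qGamma (q ^ w) (z / w)) =
        log (qGamma (q ^ w) (y / w)) - log (qGamma (q ^ w) (z / w)) := fun hy hz =>
    log_div (hΓ _ hy).ne' (hΓ _ hz).ne'
  have hA : 0 < ∏ j, qGamma (q ^ w) ((x + a j) / w) / qGamma (q ^ w) ((w + a j) / w) :=
    Finset.prod_pos fun j _ => div_pos (hΓ _ (by linarith [ha j])) (hΓ _ (by linarith [ha j]))
  have hB : 0 < ∏ i, qGamma (q ^ w) ((w + b i) / w) / qGamma (q ^ w) ((x + b i) / w) :=
    Finset.prod_pos fun i _ => div_pos (hΓ _ (by linarith [hb i])) (hΓ _ (by linarith [hb i]))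
  have hW : 0 < qBracket q w ^ (((r : ℝ) - s) * (x / w - 1)) :=
    rpow_pos_of_pos (qBracket_pos hq0 hq1 hw) _
  rw [mainSol, log_rpow (by positivity), log_mul (by positivity) hW.ne', log_mul hA.ne' hB.ne',
    log_rpow (qBracket_pos hq0 hq1 hw), log_prod fun j _ => (div_pos (hΓ _ (by linarith [ha j]))
      (hΓ _ (by linarith [ha j]))).ne', log_prod fun i _ => (div_pos (hΓ _ (by linarith [hb i]))
      (hΓ _ (by linarith [hb i]))).ne']
  simp only [hratio (add_pos_of_pos_of_nonneg hx (ha _)) (add_pos_of_pos_of_nonneg hw (ha _)),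
    hratio (add_pos_of_pos_of_nonneg hw (hb _)) (add_pos_of_pos_of_nonneg hx (hb _))]

lemma mainSol_pos (hq0 : 0 < q) (hq1 : q < 1) (hw : 0 < w) (ha : ∀ i, 0 ≤ a i)
    (hb : ∀ j, 0 ≤ b j) {x : ℝ} (hx : 0 < x) : 0 < mainSol q w k r s a b x := by
  have hΓ : ∀ y > 0, 0 < qGamma (q ^ w) (y / w) := fun _ hy => qGamma_rpow_div_pos hq0 hq1 hw hy
  refine rpow_pos_of_pos (mul_pos (mul_pos ?_ ?_) (rpow_pos_of_pos (qBracket_pos hq0 hq1 hw) _)) k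
  · exact Finset.prod_pos fun j _ =>
      div_pos (hΓ _ (by linarith [ha j])) (hΓ _ (by linarith [ha j]))
  · exact Finset.prod_pos fun i _ =>
      div_pos (hΓ _ (by linarith [hb i])) (hΓ _ (by linarith [hb i]))

lemma log_mainSol_self (hq0 : 0 < q) (hq1 : q < 1) (hw : 0 < w) (ha : ∀ i, 0 ≤ a i)
    (hb : ∀ j, 0 ≤ b j) : log (mainSol q w k r s a b w) = 0 := by
  simp [log_mainSol hq0 hq1 hw ha hb hw, div_self hw.ne']

lemma log_mainSol_add (hq0 : 0 < q) (hq1 : q < 1) (hw : 0 < w) (ha : ∀ i, 0 ≤ a i)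
    (hb : ∀ j, 0 ≤ b j) {x : ℝ} (hx : 0 < x) :
    log (mainSol q w k r s a b (x + w)) =
      k * log ((∏ i, qBracket q (x + a i)) / ∏ j, qBracket q (x + b j)) +
        log (mainSol q w k r s a b x) := by
  have hshift : ∀ {c : ℝ}, 0 ≤ c → log (qGamma (q ^ w) ((x + w + c) / w)) =
      log (qBracket q (x + c)) - log (qBracket q w) + log (qGamma (q ^ w) ((x + c) / w)) :=
    fun hc => by rw [add_right_comm, log_qGamma_rpow_add hq0 hq1 hw (by linarith)]
  have hbr : ∀ {c : ℝ}, 0 ≤ c → qBracket q (x + c) ≠ 0 := fun hc =>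
    (qBracket_pos hq0 hq1 (by linarith)).ne'
  rw [log_mainSol hq0 hq1 hw ha hb (by linarith), log_mainSol hq0 hq1 hw ha hb hx,
    log_div (Finset.prod_ne_zero_iff.2 fun i _ => hbr (ha i))
      (Finset.prod_ne_zero_iff.2 fun j _ => hbr (hb j)),
    log_prod fun i _ => hbr (ha i), log_prod fun j _ => hbr (hb j)]
  simp only [hshift (ha _), hshift (hb _)]
  simp only [Finset.sum_add_distrib, Finset.sum_sub_distrib, Finset.sum_const, Finset.card_univ,
    Fintype.card_fin, nsmul_eq_mul, add_div, div_self hw.ne']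
  ring

lemma isExpAffine_log_mainSol (hq0 : 0 < q) (hq1 : q < 1) (hw : 0 < w) (ha : ∀ i, 0 ≤ a i)
    (hb : ∀ j, 0 ≤ b j) : IsExpAffine (log q) fun x => log (mainSol q w k r s a b x) := by
  have hc : log q < 0 := log_neg hq0 hq1
  have hΓ : ∀ {c : ℝ}, 0 ≤ c → IsExpAffine (log q) fun x => log (qGamma (q ^ w) ((x + c) / w)) :=
    isExpAffine_log_qGamma_rpow hq0 hq1 hw
  refine ((((IsExpAffine.sum hc .univ fun j _ => hΓ (ha j)).sub hc
    (IsExpAffine.sum hc .univ fun i _ => hΓ (hb i))).add hc (isExpAffine_affine _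
      ((r - s) * log (qBracket q w) / w)
      (∑ i, log (qGamma (q ^ w) ((w + b i) / w)) - ∑ j, log (qGamma (q ^ w) ((w + a j) / w)) -
        (r - s) * log (qBracket q w)))).const_mul k).congr fun x hx => ?_
  rw [log_mainSol hq0 hq1 hw ha hb hx]
  simp only [Finset.sum_sub_distrib]
  ring

end MainSol

section Periodic

variable {w L l : ℝ} {u g : ℝ → ℝ}

lemma add_nat_mul_eq_of_periodic (hw : 0 ≤ w) (hper : ∀ x > 0, u (x + w) = u x) (m : ℕ)
    {x : ℝ} (hx : 0 < x) : u (x + m * w) = u x := by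
  induction m with
  | zero => simp
  | succ m ih => rw [Nat.cast_succ, add_one_mul, ← add_assoc, hper _ (by positivity), ih]

lemma iteratedDeriv_add_of_periodic (hper : ∀ x > 0, u (x + w) = u x) (j : ℕ) {x : ℝ}
    (hx : 0 < x) : iteratedDeriv j u (x + w) = iteratedDeriv j u x := by
  rw [← congrFun (iteratedDeriv_comp_add_const j u w) x]
  exact (eventuallyEq_of_mem (isOpen_Ioi.mem_nhds hx) fun y hy => hper y hy).iteratedDeriv_eq j

lemma le_of_periodic_of_monotoneOn_add (hw : 0 < w) (hper : ∀ x > 0, u (x + w) = u x)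
    (hg : Tendsto g atTop (𝓝 l)) (hmono : MonotoneOn (fun x => u x + g x) (Ioi L)) {x y : ℝ}
    (hx : 0 < x) (hy : 0 < y) : u x ≤ u y := by
  -- compare `x + m w` with the point `y + K w + m w` to its right and let `m → ∞`
  obtain ⟨K, hK⟩ := exists_nat_ge ((x - y) / w)
  have hxK : x ≤ y + K * w := by rw [div_le_iff₀ hw] at hK; linarith
  have hy' : 0 < y + K * w := by positivity
  have hshift : ∀ z : ℝ, Tendsto (fun m : ℕ => z + m * w) atTop atTop := fun z =>
    tendsto_atTop_add_const_left _ z (tendsto_natCast_atTop_atTop.atTop_mul_const hw)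
  have hle : ∀ᶠ m : ℕ in atTop, u x + g (x + m * w) ≤ u y + g (y + K * w + m * w) := by
    filter_upwards [(hshift x).eventually_gt_atTop L] with m hm
    have := hmono hm (show L < y + K * w + m * w by linarith) (by linarith)
    dsimp only at this
    rwa [add_nat_mul_eq_of_periodic hw.le hper m hx, add_nat_mul_eq_of_periodic hw.le hper m hy',
      add_nat_mul_eq_of_periodic hw.le hper K hy] at this
  have := le_of_tendsto_of_tendsto ((hg.comp (hshift x)).const_add (u x))
    ((hg.comp (hshift (y + K * w))).const_add (u y)) hle
  linarith

lemma eq_of_periodic_of_monotoneOn_add (hw : 0 < w) (hper : ∀ x > 0, u (x + w) = u x)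
    (hg : Tendsto g atTop (𝓝 l))
    (hmono : MonotoneOn (fun x => u x + g x) (Ioi L) ∨ AntitoneOn (fun x => u x + g x) (Ioi L))
    {x y : ℝ} (hx : 0 < x) (hy : 0 < y) : u x = u y := by
  rcases hmono with hm | hm
  · exact (le_of_periodic_of_monotoneOn_add hw hper hg hm hx hy).antisymm
      (le_of_periodic_of_monotoneOn_add hw hper hg hm hy hx)
  · have hper' : ∀ x > 0, -u (x + w) = -u x := fun x hx => by rw [hper x hx]
    have hm' : MonotoneOn (fun x => -u x + -g x) (Ioi L) := hm.neg.congr fun x _ => neg_add _ _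
    exact neg_injective ((le_of_periodic_of_monotoneOn_add hw hper' hg.neg hm' hx hy).antisymm
      (le_of_periodic_of_monotoneOn_add hw hper' hg.neg hm' hy hx))

lemma eq_of_periodic_of_iteratedDeriv_eq {n : ℕ} (hw : 0 < w) (hu : ContDiffOn ℝ n u (Ioi 0))
    (hper : ∀ x > 0, u (x + w) = u x)
    (hconst : ∀ x > 0, ∀ y > 0, iteratedDeriv n u x = iteratedDeriv n u y) :
    ∀ x > 0, ∀ y > 0, u x = u y := by
  induction n generalizing u with
  | zero => simpa using hconst
  | succ n ih =>
    rw [Nat.cast_succ, contDiffOn_succ_iff_deriv_of_isOpen isOpen_Ioi] at hu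
    obtain ⟨hdiff, -, hderiv⟩ := hu
    have hd : ∀ x > 0, ∀ y > 0, deriv u x = deriv u y :=
      ih hderiv (fun x hx => by simpa using iteratedDeriv_add_of_periodic hper 1 hx)
        (by simpa only [iteratedDeriv_succ'] using hconst)
    -- `u x - c x` has zero derivative, and periodicity of `u` forces `c = 0`
    set c := deriv u w
    have hlin : ∀ x > 0, ∀ y > 0, u x - c * x = u y - c * y := fun x hx y hy => by
      refine isOpen_Ioi.is_const_of_deriv_eq_zero (convex_Ioi 0).isPreconnected
        (hdiff.sub (differentiableOn_id.const_mul c)) (fun z hz => ?_) hx hy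
      have hdz := ((hdiff z hz).differentiableAt (isOpen_Ioi.mem_nhds hz)).hasDerivAt.sub
        ((hasDerivAt_id z).const_mul c)
      rw [hdz.deriv, mul_one, hd z hz w hw, sub_self, Pi.zero_apply]
    have hc : c = 0 := by
      have := hlin (w + w) (by linarith) w hw
      rw [hper w hw] at this
      nlinarith
    intro x hx y hy
    simpa [hc] using hlin x hx y hy

theorem sub_eq_sub_of_periodic_sub_of_monotoneOn_iteratedDerivWithin {F G : ℝ → ℝ} {n : ℕ}
    (hw : 0 < w) (hF : ContDiffOn ℝ n F (Ioi 0)) (hG : ContDiffOn ℝ n G (Ioi 0))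
    (hper : ∀ x > 0, F (x + w) - G (x + w) = F x - G x)
    (hGlim : Tendsto (iteratedDeriv n G) atTop (𝓝 l))
    (hmono : MonotoneOn (iteratedDerivWithin n F (Ioi 0)) (Ioi L) ∨
      AntitoneOn (iteratedDerivWithin n F (Ioi 0)) (Ioi L)) :
    ∀ x > 0, ∀ y > 0, F x - G x = F y - G y := by
  have hFG : ContDiffOn ℝ n (fun x => F x - G x) (Ioi 0) := hF.sub hG
  have hsplit : EqOn (iteratedDerivWithin n F (Ioi 0))
      (fun x => iteratedDeriv n (fun x => F x - G x) x + iteratedDeriv n G x) (Ioi 0) := by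
    intro x hx
    dsimp only
    rw [iteratedDerivWithin_of_isOpen isOpen_Ioi hx, ← iteratedDeriv_add
      (hFG.contDiffAt (isOpen_Ioi.mem_nhds hx)) (hG.contDiffAt (isOpen_Ioi.mem_nhds hx))]
    congr 1
    funext y
    simp
  have hsub : Ioi (max L 0) ⊆ Ioi L := Ioi_subset_Ioi (le_max_left L 0)
  have heq := hsplit.mono (Ioi_subset_Ioi (le_max_right L 0))
  refine eq_of_periodic_of_iteratedDeriv_eq hw hFG hper fun x hx y hy =>
    eq_of_periodic_of_monotoneOn_add (L := max L 0) hw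
      (fun z hz => iteratedDeriv_add_of_periodic hper n hz) hGlim ?_ hx hy
  exact hmono.imp (fun hm => (hm.mono hsub).congr heq) (fun hm => (hm.mono hsub).congr heq)

end Periodic

theorem stmt10_general (q w k : ℝ) (hq0 : 0 < q) (hq1 : q < 1) (hw : 0 < w) (r s : ℕ)
    (a : Fin r → ℝ) (b : Fin s → ℝ) (ha : ∀ i, 0 ≤ a i) (hb : ∀ j, 0 ≤ b j)
    (f : ℝ → ℝ) (hpos : ∀ x > 0, 0 < f x)
    (hfe : ∀ x > 0, f (x + w) =
      ((∏ i, qBracket q (x + a i)) / ∏ j, qBracket q (x + b j)) ^ k * f x)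
    (hfw : f w = 1)
    (n : ℕ) (hn : 1 ≤ n) (L : ℝ)
    (hsmooth : ContDiffOn ℝ n (fun x => Real.log (f x)) (Ioi 0))
    (hmono : MonotoneOn (iteratedDerivWithin n (fun x => Real.log (f x)) (Ioi 0)) (Ioi L) ∨
             AntitoneOn (iteratedDerivWithin n (fun x => Real.log (f x)) (Ioi 0)) (Ioi L)) :
    ∀ x > 0, f x = mainSol q w k r s a b x := by
  have hc : log q < 0 := log_neg hq0 hq1
  have hG := isExpAffine_log_mainSol (k := k) hq0 hq1 hw ha hb
  obtain ⟨l, hl⟩ := hG.tendsto_iteratedDeriv hc hn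
  have hper : ∀ x > 0, log (f (x + w)) - log (mainSol q w k r s a b (x + w)) =
      log (f x) - log (mainSol q w k r s a b x) := fun x hx => by
    have hR : 0 < (∏ i, qBracket q (x + a i)) / ∏ j, qBracket q (x + b j) :=
      div_pos (Finset.prod_pos fun i _ => qBracket_pos hq0 hq1 (by linarith [ha i]))
        (Finset.prod_pos fun j _ => qBracket_pos hq0 hq1 (by linarith [hb j]))
    rw [hfe x hx, log_mul (rpow_pos_of_pos hR k).ne' (hpos x hx).ne', log_rpow hR,
      log_mainSol_add hq0 hq1 hw ha hb hx]
    ring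
  have hconst := sub_eq_sub_of_periodic_sub_of_monotoneOn_iteratedDerivWithin hw hsmooth
    (hG.contDiffOn hc n) hper hl hmono
  intro x hx
  have hlog := hconst x hx w hw
  rw [hfw, log_one, log_mainSol_self hq0 hq1 hw ha hb, sub_zero, sub_eq_zero] at hlog
  exact log_injOn_pos (hpos x hx) (mainSol_pos hq0 hq1 hw ha hb hx) hlog

theorem stmt10 (q w k : ℝ) (hq0 : 0 < q) (hq1 : q < 1) (hw : 0 < w) (r s : ℕ)
    (a : Fin r → ℝ) (b : Fin s → ℝ) (ha : ∀ i, 0 ≤ a i) (hb : ∀ j, 0 ≤ b j)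
    (f : ℝ → ℝ) (hpos : ∀ x > 0, 0 < f x)
    (hfe : ∀ x > 0, f (x + w) =
      ((∏ i, qBracket q (x + a i)) / ∏ j, qBracket q (x + b j)) ^ k * f x)
    (hfw : f w = 1)
    (n : ℕ) (hn : 1 ≤ n) (L : ℝ) (hL : 0 ≤ L)
    (hsmooth : ContDiffOn ℝ n (fun x => Real.log (f x)) (Ioi 0))
    (hmono : MonotoneOn (iteratedDerivWithin n (fun x => Real.log (f x)) (Ioi 0)) (Ioi L) ∨
             AntitoneOn (iteratedDerivWithin n (fun x => Real.log (f x)) (Ioi 0)) (Ioi L)) :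
    ∀ x > 0, f x = mainSol q w k r s a b x :=
  stmt10_general q w k hq0 hq1 hw r s a b ha hb f hpos hfe hfw n hn L hsmooth hmono
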